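/- arXiv:1701.01340 — 3 statements merged into one kernel-verified Lean document; each statement's English description precedes it below -/
import Mathlib

section
/- Let X = (X_1,…,X_d) be a random vector with joint distribution function F_X(t) = exp(−β max_{1≤i≤d} σ_i t_i^{−1/η} − (1−β)(Σ_{i=1}^d σ_i^{η/α} t_i^{−1/α})^{α/η}) for t ∈ (0,∞)^d, and let I = {1,…,d} be partitioned into two nonempty blocks I_1, I_2. Then the tail dependence coefficient of (X_{I_1}, X_{I_2}) equals lim_{t→∞} t · P(M(I_1) > 1 − 1/t, M(I_2) > 1 − 1/t) = β(1 − |I_1|^{α/η} − |I_2|^{α/η} + (|I_1| + |I_2|)^{α/η}) + |I_1|^{α/η} + |I_2|^{α/η} − (|I_1| + |I_2|)^{α/η}. -/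
open MeasureTheory ProbabilityTheory Real Filter Topology
open scoped ProbabilityTheory

noncomputable section

/-- Marginal Fréchet-type distribution function `F_i(t) = exp(-σ t^(-1/η))` for `t > 0`. -/
def margF (σ η t : ℝ) : ℝ := if 0 < t then Real.exp (-σ * t ^ (-1 / η)) else 0

/-- Joint distribution function of the random vector `X`. -/
def jointF {Ω : Type*} [MeasureSpace Ω] {d : ℕ} (X : Fin d → Ω → ℝ) (t : Fin d → ℝ) : ℝ :=
  (ℙ {ω | ∀ i, X i ω ≤ t i}).toReal

/-- Exponent function `ℓ(t) = -ln F_X(t)`. -/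
def expo {Ω : Type*} [MeasureSpace Ω] {d : ℕ} (X : Fin d → Ω → ℝ) (t : Fin d → ℝ) : ℝ :=
  -Real.log (jointF X t)

/-- Block maximum `M(I_j) = max_{i ∈ I_j} F_i(X_i)`, where `I_j = {i | B i = j}`. -/
def blockMax {Ω : Type*} [MeasureSpace Ω] {d p : ℕ} (B : Fin d → Fin p) (σ : Fin d → ℝ)
    (η : ℝ) (X : Fin d → Ω → ℝ) (j : Fin p) (ω : Ω) : ℝ :=
  sSup ((fun i => margF (σ i) η (X i ω)) '' {i | B i = j})

/-- Extremal dependence function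
`ε(λ₁,…,λ_p) = E(max_j M(I_j)^(λ_j)) / (1 - E(max_j M(I_j)^(λ_j)))`. -/
def epsFun {Ω : Type*} [MeasureSpace Ω] {d p : ℕ} (B : Fin d → Fin p) (σ : Fin d → ℝ)
    (η : ℝ) (X : Fin d → Ω → ℝ) (l : Fin p → ℝ) : ℝ :=
  (∫ ω, ⨆ j, blockMax B σ η X j ω ^ l j ∂ℙ) /
    (1 - ∫ ω, ⨆ j, blockMax B σ η X j ω ^ l j ∂ℙ)

/-- Single-block extremal dependence function `ε_{I_j}(λ)`. -/
def epsBlock {Ω : Type*} [MeasureSpace Ω] {d p : ℕ} (B : Fin d → Fin p) (σ : Fin d → ℝ)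
    (η : ℝ) (X : Fin d → Ω → ℝ) (j : Fin p) (l : ℝ) : ℝ :=
  (∫ ω, blockMax B σ η X j ω ^ l ∂ℙ) / (1 - ∫ ω, blockMax B σ η X j ω ^ l ∂ℙ)


/-!
A block maximum satisfies `M(I_j) ≤ u` exactly when every `X_i`, `i ∈ I_j`, lies below its
marginal `u`-quantile. Sending the thresholds outside a set `S` of coordinates to infinity in
`F_X` shows that all coordinates of `S` lie below their `e^{-s}`-quantiles with probability
`e^{-c(|S|) s}`, where `c(k) = β + (1 - β) k^{α/η}`. By inclusion–exclusion,
`P(M(I_1) > u, M(I_2) > u) = 1 - u^{c(|I_1|)} - u^{c(|I_2|)} + u^{c(|I_1| + |I_2|)}`, and since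
`t (1 - (1 - 1/t)^c) → c`, the tail dependence coefficient is
`c(|I_1|) + c(|I_2|) - c(|I_1| + |I_2|)`.
-/

theorem tendsto_mul_one_sub_one_sub_inv_rpow (c : ℝ) :
    Tendsto (fun t : ℝ => t * (1 - (1 - 1 / t) ^ c)) atTop (𝓝 c) := by
  have hderiv : HasDerivAt (fun x : ℝ => (1 - x) ^ c) (-c) 0 := by
    simpa using ((hasDerivAt_id (0 : ℝ)).const_sub 1).rpow_const (p := c) (by simp)
  have hinv : Tendsto (fun t : ℝ => 1 / t) atTop (𝓝[≠] 0) := by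
    simpa only [one_div] using tendsto_inv_atTop_nhdsGT_zero.mono_right (nhdsGT_le_nhdsNE 0)
  have hslope := (hasDerivAt_iff_tendsto_slope.mp hderiv).comp hinv |>.neg
  rw [neg_neg] at hslope
  refine hslope.congr' ?_
  filter_upwards [eventually_gt_atTop 0] with t ht
  simp only [Function.comp_apply, slope_def_field, sub_zero, Real.one_rpow]
  field_simp
  ring

/-- The level at which `margF σ η` equals `exp (-s)`. -/
def margQuantile (σ η s : ℝ) : ℝ := (σ / s) ^ η

section Quantile

variable {σ η s : ℝ}

theorem margQuantile_pos (hσ : 0 < σ) (hs : 0 < s) : 0 < margQuantile σ η s :=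
  Real.rpow_pos_of_pos (div_pos hσ hs) η

theorem rpow_div_mul_margQuantile_rpow (hσ : 0 < σ) (hs : 0 < s) (b : ℝ) :
    σ ^ (η / b) * margQuantile σ η s ^ (-1 / b) = s ^ (η / b) := by
  have hσs : 0 < σ / s := div_pos hσ hs
  rw [margQuantile, ← Real.rpow_mul hσs.le, show η * (-1 / b) = -(η / b) by ring,
    Real.rpow_neg hσs.le, ← Real.inv_rpow hσs.le, inv_div,
    ← Real.mul_rpow hσ.le (div_pos hs hσ).le, mul_div_cancel₀ s hσ.ne']

theorem mul_margQuantile_rpow (hσ : 0 < σ) (hη : η ≠ 0) (hs : 0 < s) :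
    σ * margQuantile σ η s ^ (-1 / η) = s := by
  simpa [div_self hη] using rpow_div_mul_margQuantile_rpow (η := η) hσ hs η

theorem margF_le_exp_neg_iff (hσ : 0 < σ) (hη : 0 < η) (hs : 0 < s) {x : ℝ} :
    margF σ η x ≤ exp (-s) ↔ x ≤ margQuantile σ η s := by
  have hq := margQuantile_pos (η := η) hσ hs
  unfold margF
  split_ifs with hx
  · have hexp : -1 / η < 0 := div_neg_of_neg_of_pos neg_one_lt_zero hη
    rw [Real.exp_le_exp, neg_mul, neg_le_neg_iff, ← Real.rpow_le_rpow_iff_of_neg hq hx hexp]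
    nth_rw 1 [← mul_margQuantile_rpow hσ hη.ne' hs]
    exact mul_le_mul_iff_right₀ hσ
  · exact iff_of_true (exp_pos _).le ((not_lt.1 hx).trans hq.le)

end Quantile

section BlockMax

variable {Ω : Type*} [MeasureSpace Ω] {d p : ℕ} {B : Fin d → Fin p} {σ : Fin d → ℝ} {η : ℝ}
  {X : Fin d → Ω → ℝ} {j : Fin p}

theorem blockMax_le_iff (hj : ∃ i, B i = j) (ω : Ω) (u : ℝ) :
    blockMax B σ η X j ω ≤ u ↔ ∀ i, B i = j → margF (σ i) η (X i ω) ≤ u := by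
  obtain ⟨i₀, hi₀⟩ := hj
  rw [blockMax, csSup_le_iff ((Set.toFinite _).image _).bddAbove ⟨_, i₀, hi₀, rfl⟩,
    Set.forall_mem_image]
  rfl

theorem blockMax_le_exp_neg_iff (hσ : ∀ i, 0 < σ i) (hη : 0 < η) (hj : ∃ i, B i = j)
    {s : ℝ} (hs : 0 < s) (ω : Ω) :
    blockMax B σ η X j ω ≤ exp (-s) ↔
      ∀ i ∈ Finset.univ.filter (B · = j), X i ω ≤ margQuantile (σ i) η s := by
  simp only [blockMax_le_iff hj, margF_le_exp_neg_iff (hσ _) hη hs, Finset.mem_filter,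
    Finset.mem_univ, true_and]

end BlockMax

theorem tendsto_ciSup_of_tendsto {ι α L : Type*} [Fintype ι] [Nonempty ι]
    [ConditionallyCompleteLattice L] [TopologicalSpace L] [ContinuousSup L]
    {f : ι → α → L} {g : ι → L} {l : Filter α} (h : ∀ i, Tendsto (f i) l (𝓝 (g i))) :
    Tendsto (fun a => ⨆ i, f i a) l (𝓝 (⨆ i, g i)) := by
  simpa only [← Finset.sup'_univ_eq_ciSup] using
    Tendsto.finset_sup'_nhds_apply Finset.univ_nonempty fun i _ => h i

theorem tendsto_const_mul_rpow_neg_one_div_atTop (c : ℝ) {q : ℝ} (hq : 0 < q) :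
    Tendsto (fun x : ℝ => c * x ^ (-1 / q)) atTop (𝓝 0) := by
  simpa only [neg_div, mul_zero] using (tendsto_rpow_neg_atTop (one_div_pos.2 hq)).const_mul c

theorem measureReal_compl_inter_compl {Ω : Type*} [MeasurableSpace Ω] {μ : Measure Ω}
    [IsProbabilityMeasure μ] {A C : Set Ω} (hA : MeasurableSet A) (hC : MeasurableSet C) :
    μ.real (Aᶜ ∩ Cᶜ) = 1 - μ.real A - μ.real C + μ.real (A ∩ C) := by
  rw [← Set.compl_union, probReal_compl_eq_one_sub (hA.union hC)]
  linarith [measureReal_union_add_inter (μ := μ) (s := A) hC]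

section Marginal

variable {Ω ι : Type*} [MeasurableSpace Ω] [DecidableEq ι]

def raiseOutside (S : Finset ι) (T : ι → ℝ) (n : ℕ) (i : ι) : ℝ :=
  if i ∈ S then T i else T i + n

theorem raiseOutside_pos {S : Finset ι} {T : ι → ℝ} (hT : ∀ i, 0 < T i) (n : ℕ) (i : ι) :
    0 < raiseOutside S T n i := by
  unfold raiseOutside
  split_ifs
  exacts [hT i, add_pos_of_pos_of_nonneg (hT i) n.cast_nonneg]

theorem tendsto_comp_raiseOutside (S : Finset ι) (T : ι → ℝ) {φ : ℝ → ℝ}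
    (hφ : Tendsto φ atTop (𝓝 0)) (i : ι) :
    Tendsto (fun n => φ (raiseOutside S T n i)) atTop
      (𝓝 (if i ∈ S then φ (T i) else 0)) := by
  unfold raiseOutside
  split_ifs
  exacts [tendsto_const_nhds,
    hφ.comp (tendsto_atTop_add_const_left _ _ tendsto_natCast_atTop_atTop)]

theorem tendsto_measure_forall_le_raiseOutside [Finite ι] (μ : Measure Ω) (X : ι → Ω → ℝ)
    (S : Finset ι) (T : ι → ℝ) :
    Tendsto (fun n => μ {ω | ∀ i, X i ω ≤ raiseOutside S T n i}) atTop
      (𝓝 (μ {ω | ∀ i ∈ S, X i ω ≤ T i})) := by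
  have hmono : Monotone fun n => {ω | ∀ i, X i ω ≤ raiseOutside S T n i} := by
    intro m n hmn ω hω i
    refine (hω i).trans ?_
    unfold raiseOutside
    split_ifs
    exacts [le_rfl, by gcongr]
  have hunion :
      ⋃ n, {ω | ∀ i, X i ω ≤ raiseOutside S T n i} = {ω | ∀ i ∈ S, X i ω ≤ T i} := by
    ext ω
    simp only [Set.mem_iUnion]
    constructor
    · rintro ⟨n, hn⟩ i hi
      simpa [raiseOutside, hi] using hn i
    · intro h
      refine (eventually_all (l := atTop).2 fun i => ?_).exists
      by_cases hi : i ∈ S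
      · exact .of_forall fun n => by simpa [raiseOutside, hi] using h i hi
      · filter_upwards [tendsto_natCast_atTop_atTop.eventually_ge_atTop (X i ω - T i)] with n hn
        simp only [raiseOutside, hi, if_false]
        linarith
  rw [← hunion]
  exact tendsto_measure_iUnion_atTop hmono

end Marginal

section MixedModel

variable {ι : Type*} [Fintype ι] [DecidableEq ι]

/-- The exponent `-log F_X` of the model, as a function of the thresholds. -/
def mixedExponent (σ : ι → ℝ) (α η β : ℝ) (t : ι → ℝ) : ℝ :=
  β * (⨆ i, σ i * t i ^ (-1 / η))
    + (1 - β) * (∑ i, σ i ^ (η / α) * t i ^ (-1 / α)) ^ (α / η)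

def extremalCoeff (α η β k : ℝ) : ℝ := β + (1 - β) * k ^ (α / η)

variable {σ : ι → ℝ} {α η β s : ℝ}

theorem tendsto_mixedExponent_raiseOutside (hσ : ∀ i, 0 < σ i) (hα : 0 < α) (hη : 0 < η)
    (hs : 0 < s) {S : Finset ι} (hS : S.Nonempty) :
    Tendsto (fun n => mixedExponent σ α η β (raiseOutside S (fun i => margQuantile (σ i) η s) n))
      atTop (𝓝 (extremalCoeff α η β S.card * s)) := by
  have : Nonempty ι := ⟨hS.choose⟩
  set T : ι → ℝ := fun i => margQuantile (σ i) η s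
  have hmax : Tendsto (fun n => ⨆ i, σ i * raiseOutside S T n i ^ (-1 / η)) atTop (𝓝 s) := by
    convert tendsto_ciSup_of_tendsto fun i => tendsto_comp_raiseOutside S T
      (tendsto_const_mul_rpow_neg_one_div_atTop (σ i) hη) i using 2
    simp only [T, mul_margQuantile_rpow (hσ _) hη.ne' hs]
    obtain ⟨i₀, hi₀⟩ := hS
    refine le_antisymm (le_ciSup_of_le (Set.finite_range _).bddAbove i₀ (by simp [hi₀]))
      (ciSup_le fun i => ?_)
    split_ifs
    exacts [le_rfl, hs.le]
  have hsum : Tendsto (fun n => ∑ i, σ i ^ (η / α) * raiseOutside S T n i ^ (-1 / α)) atTop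
      (𝓝 (S.card * s ^ (η / α))) := by
    convert tendsto_finsetSum _ fun i _ => tendsto_comp_raiseOutside S T
      (tendsto_const_mul_rpow_neg_one_div_atTop (σ i ^ (η / α)) hα) i using 2
    simp only [T, rpow_div_mul_margQuantile_rpow (hσ _) hs, Finset.sum_ite_mem, Finset.univ_inter,
      Finset.sum_const, nsmul_eq_mul]
  have hcoeff : β * s + (1 - β) * ((S.card : ℝ) * s ^ (η / α)) ^ (α / η)
      = extremalCoeff α η β S.card * s := by
    rw [Real.mul_rpow (Nat.cast_nonneg _) (Real.rpow_nonneg hs.le _), ← Real.rpow_mul hs.le,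
      show η / α * (α / η) = 1 by field_simp, Real.rpow_one, extremalCoeff]
    ring
  rw [← hcoeff]
  exact (hmax.const_mul β).add
    ((hsum.rpow_const (Or.inr (div_pos hα hη).le)).const_mul (1 - β))

end MixedModel

theorem measure_forall_le_margQuantile {Ω ι : Type*} [MeasurableSpace Ω] [Fintype ι]
    [DecidableEq ι] (μ : Measure Ω) (X : ι → Ω → ℝ) {σ : ι → ℝ} (hσ : ∀ i, 0 < σ i)
    {α η β : ℝ} (hα : 0 < α) (hη : 0 < η)
    (hjoint : ∀ t : ι → ℝ, (∀ i, 0 < t i) →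
      μ {ω | ∀ i, X i ω ≤ t i} = ENNReal.ofReal (exp (-mixedExponent σ α η β t)))
    {S : Finset ι} (hS : S.Nonempty) {s : ℝ} (hs : 0 < s) :
    μ {ω | ∀ i ∈ S, X i ω ≤ margQuantile (σ i) η s}
      = ENNReal.ofReal (exp (-(extremalCoeff α η β S.card * s))) := by
  have hT : ∀ i, 0 < margQuantile (σ i) η s := fun i => margQuantile_pos (hσ i) hs
  refine tendsto_nhds_unique (tendsto_measure_forall_le_raiseOutside μ X S _) ?_
  refine ((ENNReal.continuous_ofReal.comp continuous_exp).tendsto _).comp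
    (tendsto_mixedExponent_raiseOutside hσ hα hη hs hS).neg |>.congr fun n => ?_
  exact (hjoint _ (raiseOutside_pos hT n)).symm

theorem measureReal_exp_neg_lt_blockMax {Ω : Type*} [MeasureSpace Ω]
    [IsProbabilityMeasure (ℙ : Measure Ω)] {d p : ℕ} {X : Fin d → Ω → ℝ}
    (hX : ∀ i, Measurable (X i)) {σ : Fin d → ℝ} (hσ : ∀ i, 0 < σ i) {α η β : ℝ}
    (hα : 0 < α) (hη : 0 < η)
    (hjoint : ∀ t : Fin d → ℝ, (∀ i, 0 < t i) →
      ℙ {ω | ∀ i, X i ω ≤ t i} = ENNReal.ofReal (exp (-mixedExponent σ α η β t)))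
    {B : Fin d → Fin p} {j k : Fin p} (hjk : j ≠ k) (hj : ∃ i, B i = j) (hk : ∃ i, B i = k)
    {s : ℝ} (hs : 0 < s) :
    (ℙ : Measure Ω).real {ω | exp (-s) < blockMax B σ η X j ω ∧ exp (-s) < blockMax B σ η X k ω}
      = 1 - exp (-(extremalCoeff α η β (Finset.univ.filter (B · = j)).card * s))
        - exp (-(extremalCoeff α η β (Finset.univ.filter (B · = k)).card * s))
        + exp (-(extremalCoeff α η β ((Finset.univ.filter (B · = j)).card
          + (Finset.univ.filter (B · = k)).card) * s)) := by
  set Sj := Finset.univ.filter (B · = j)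
  set Sk := Finset.univ.filter (B · = k)
  set C : Finset (Fin d) → Set Ω := fun S => {ω | ∀ i ∈ S, X i ω ≤ margQuantile (σ i) η s}
  have hC : ∀ S, MeasurableSet (C S) := fun S => by
    simp only [C, Set.ofPred_forall]
    exact .iInter fun i => .iInter fun _ => measurableSet_le (hX i) measurable_const
  have hevent : {ω | exp (-s) < blockMax B σ η X j ω ∧ exp (-s) < blockMax B σ η X k ω}
      = (C Sj)ᶜ ∩ (C Sk)ᶜ := by
    ext ω
    simp only [← not_le, blockMax_le_exp_neg_iff hσ hη hj hs,
      blockMax_le_exp_neg_iff hσ hη hk hs]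
    rfl
  have hinter : C Sj ∩ C Sk = C (Sj ∪ Sk) := by
    ext ω
    simp only [C, Set.mem_inter_iff, Set.mem_ofPred_eq, Finset.forall_mem_union]
  have hcard : ((Sj ∪ Sk).card : ℝ) = Sj.card + Sk.card := by
    rw [Finset.card_union_of_disjoint (Finset.disjoint_filter.2 fun i _ hij => hij ▸ hjk),
      Nat.cast_add]
  have hSj : Sj.Nonempty := by simpa [Sj, Finset.filter_nonempty_iff] using hj
  have hSk : Sk.Nonempty := by simpa [Sk, Finset.filter_nonempty_iff] using hk
  rw [hevent, measureReal_compl_inter_compl (hC _) (hC _), hinter, measureReal_def,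
    measureReal_def, measureReal_def, ← hcard,
    measure_forall_le_margQuantile ℙ X hσ hα hη hjoint hSj hs,
    measure_forall_le_margQuantile ℙ X hσ hα hη hjoint hSk hs,
    measure_forall_le_margQuantile ℙ X hσ hα hη hjoint (hSj.mono Finset.subset_union_left) hs,
    ENNReal.toReal_ofReal (exp_pos _).le, ENNReal.toReal_ofReal (exp_pos _).le,
    ENNReal.toReal_ofReal (exp_pos _).le]

theorem statement16_general
    {Ω : Type*} [MeasureSpace Ω] [IsProbabilityMeasure (ℙ : Measure Ω)]
    {d : ℕ}
    (X : Fin d → Ω → ℝ) (hX : ∀ i, Measurable (X i))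
    (σ : Fin d → ℝ) (hσ : ∀ i, 0 < σ i)
    (α η : ℝ) (hα : 0 < α) (hαη : α ≤ η)
    (β : ℝ)
    (hjoint : ∀ t : Fin d → ℝ, (∀ i, 0 < t i) →
      ℙ {ω | ∀ i, X i ω ≤ t i} =
        ENNReal.ofReal (Real.exp (-(β * ⨆ i, σ i * t i ^ (-1 / η)) -
          (1 - β) * (∑ i, σ i ^ (η / α) * t i ^ (-1 / α)) ^ (α / η))))
    (B : Fin d → Fin 2) (hB : Function.Surjective B) :
    Tendsto (fun t : ℝ => t * (ℙ {ω | 1 - 1 / t < blockMax B σ η X 0 ω ∧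
        1 - 1 / t < blockMax B σ η X 1 ω}).toReal) atTop
      (𝓝 (β * (1 - ((Finset.univ.filter fun i => B i = 0).card : ℝ) ^ (α / η)
            - ((Finset.univ.filter fun i => B i = 1).card : ℝ) ^ (α / η)
            + (((Finset.univ.filter fun i => B i = 0).card : ℝ)
              + ((Finset.univ.filter fun i => B i = 1).card : ℝ)) ^ (α / η))
          + ((Finset.univ.filter fun i => B i = 0).card : ℝ) ^ (α / η)
          + ((Finset.univ.filter fun i => B i = 1).card : ℝ) ^ (α / η)
          - (((Finset.univ.filter fun i => B i = 0).card : ℝ)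
            + ((Finset.univ.filter fun i => B i = 1).card : ℝ)) ^ (α / η))) := by
  set k₀ : ℝ := ((Finset.univ.filter fun i => B i = 0).card : ℝ)
  set k₁ : ℝ := ((Finset.univ.filter fun i => B i = 1).card : ℝ)
  have hexponent : ∀ t : Fin d → ℝ, (∀ i, 0 < t i) →
      ℙ {ω | ∀ i, X i ω ≤ t i} = ENNReal.ofReal (exp (-mixedExponent σ α η β t)) := by
    intro t ht
    rw [hjoint t ht, mixedExponent, neg_add, ← sub_eq_add_neg]
  have hprob : ∀ᶠ t : ℝ in atTop, t * (ℙ {ω | 1 - 1 / t < blockMax B σ η X 0 ω ∧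
      1 - 1 / t < blockMax B σ η X 1 ω}).toReal
      = t * (1 - (1 - 1 / t) ^ extremalCoeff α η β k₀)
        + t * (1 - (1 - 1 / t) ^ extremalCoeff α η β k₁)
        - t * (1 - (1 - 1 / t) ^ extremalCoeff α η β (k₀ + k₁)) := by
    filter_upwards [eventually_gt_atTop 1] with t ht
    have hu : 0 < 1 - 1 / t := by rw [sub_pos, div_lt_one (by positivity)]; exact ht
    -- the level `1 - 1 / t` is `exp (-s)` for `s = -log (1 - 1 / t)`
    have hs : 0 < -log (1 - 1 / t) := neg_pos.2 (log_neg hu (by simp; positivity))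
    have hexp : ∀ c, exp (-(c * -log (1 - 1 / t))) = (1 - 1 / t) ^ c := fun c => by
      rw [Real.rpow_def_of_pos hu]; ring_nf
    have h := measureReal_exp_neg_lt_blockMax hX hσ hα (hα.trans_le hαη) hexponent
      zero_ne_one (hB 0) (hB 1) hs
    rw [neg_neg, exp_log hu, hexp, hexp, hexp] at h
    rw [← measureReal_def, h]
    ring
  have hlimit : β * (1 - k₀ ^ (α / η) - k₁ ^ (α / η) + (k₀ + k₁) ^ (α / η))
      + k₀ ^ (α / η) + k₁ ^ (α / η) - (k₀ + k₁) ^ (α / η)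
      = extremalCoeff α η β k₀ + extremalCoeff α η β k₁ - extremalCoeff α η β (k₀ + k₁) := by
    simp only [extremalCoeff]
    ring
  rw [hlimit]
  exact (((tendsto_mul_one_sub_one_sub_inv_rpow _).add (tendsto_mul_one_sub_one_sub_inv_rpow _)).sub
    (tendsto_mul_one_sub_one_sub_inv_rpow _)).congr' (hprob.mono fun _ h => h.symm)

theorem statement16
    {Ω : Type*} [MeasureSpace Ω] [IsProbabilityMeasure (ℙ : Measure Ω)]
    {d : ℕ} (hd : 0 < d)
    (X : Fin d → Ω → ℝ) (hX : ∀ i, Measurable (X i))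
    (σ : Fin d → ℝ) (hσ : ∀ i, 0 < σ i)
    (α η : ℝ) (hα : 0 < α) (hαη : α ≤ η) (hη1 : η ≤ 1)
    (β : ℝ) (hβ0 : 0 ≤ β) (hβ1 : β ≤ 1)
    (hjoint : ∀ t : Fin d → ℝ, (∀ i, 0 < t i) →
      ℙ {ω | ∀ i, X i ω ≤ t i} =
        ENNReal.ofReal (Real.exp (-(β * ⨆ i, σ i * t i ^ (-1 / η)) -
          (1 - β) * (∑ i, σ i ^ (η / α) * t i ^ (-1 / α)) ^ (α / η))))
    (B : Fin d → Fin 2) (hB : Function.Surjective B) :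
    Tendsto (fun t : ℝ => t * (ℙ {ω | 1 - 1 / t < blockMax B σ η X 0 ω ∧
        1 - 1 / t < blockMax B σ η X 1 ω}).toReal) atTop
      (𝓝 (β * (1 - ((Finset.univ.filter fun i => B i = 0).card : ℝ) ^ (α / η)
            - ((Finset.univ.filter fun i => B i = 1).card : ℝ) ^ (α / η)
            + (((Finset.univ.filter fun i => B i = 0).card : ℝ)
              + ((Finset.univ.filter fun i => B i = 1).card : ℝ)) ^ (α / η))
          + ((Finset.univ.filter fun i => B i = 0).card : ℝ) ^ (α / η)
          + ((Finset.univ.filter fun i => B i = 1).card : ℝ) ^ (α / η)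
          - (((Finset.univ.filter fun i => B i = 0).card : ℝ)
            + ((Finset.univ.filter fun i => B i = 1).card : ℝ)) ^ (α / η))) :=
  statement16_general X hX σ hσ α η hα hαη β hjoint B hB
end
end

section
/- Let d = 2, i.e. X = (X_1, X_2) satisfies conditions (i) and (ii), and write L = ℓ(σ_1^η, σ_2^η) (so 1 ≤ L ≤ 2). If L < 2 (tail dependence), then lim_{t→∞} t · P(F_1(X_1) > 1 − 1/t, F_2(X_2) > 1 − 1/t) = 2 − L, so the Ledford–Tawn condition P(F_1(X_1) > 1 − 1/t, F_2(X_2) > 1 − 1/t) = t^{−1/κ} 𝓛(t) holds with coefficient of asymptotic tail independence κ = 1 and 𝓛(t) → 2 − L. If L = 2 (independence in the tail), then P(F_1(X_1) > 1 − 1/t, F_2(X_2) > 1 − 1/t) = t^{−2} exactly for all t > 1, so the Ledford–Tawn condition holds with κ = 1/2 and 𝓛 ≡ 1. -/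
open MeasureTheory ProbabilityTheory Real Filter Topology
open scoped ProbabilityTheory

noncomputable section

/-!
Put `a = e^{-s}`. Since `F_i(x) > e^{-s}` iff `x > u_i := (σ_i / s)^η`, the joint exceedance
event is the complement of `{X_1 ≤ u_1} ∪ {X_2 ≤ u_2}`. The marginals give
`P(X_i ≤ u_i) = e^{-s}`, and as `u = s^{-η} σ^η`, homogeneity of `ℓ` gives
`P(X ≤ u) = e^{-sℓ(σ^η)} = a^L`. Inclusion–exclusion then yields the exact formula
`1 - 2a + a^L` with `a = 1 - 1/t`. For `L = 2` this is `(1 - a)^2 = t^{-2}`; in general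
`t (1 - 2a + a^L) = 2 - t (1 - (1 - 1/t)^L) → 2 - L`, the derivative of `(1 - x)^L` at `0`
being `-L`.
-/

lemma rpow_rpow_neg_one_div {x η : ℝ} (hx : 0 ≤ x) (hη : η ≠ 0) :
    (x ^ η) ^ (-1 / η) = x⁻¹ := by
  rw [← Real.rpow_mul hx, mul_div_assoc', mul_neg_one, neg_div_self hη, Real.rpow_neg_one]

lemma exp_neg_lt_margF_iff {σ η s x : ℝ} (hσ : 0 < σ) (hη : 0 < η) (hs : 0 < s) :
    exp (-s) < margF σ η x ↔ (σ / s) ^ η < x := by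
  have hq : 0 < (σ / s) ^ η := by positivity
  unfold margF
  split_ifs with hx
  · have hneg : -1 / η < 0 := div_neg_of_neg_of_pos (by norm_num) hη
    rw [exp_lt_exp, ← Real.rpow_lt_rpow_iff_of_neg hx hq hneg,
      rpow_rpow_neg_one_div (div_pos hσ hs).le hη.ne', inv_div, lt_div_iff₀ hσ]
    constructor <;> intro h <;> linarith
  · exact iff_of_false (not_lt.2 (exp_pos _).le) (by linarith)

lemma measureReal_le_rpow_div_of_frechet {Ω : Type*} [MeasurableSpace Ω] {μ : Measure Ω}
    {Y : Ω → ℝ} {σ η s : ℝ} (hσ : 0 < σ) (hη : η ≠ 0) (hs : 0 < s)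
    (hY : ∀ t : ℝ, 0 < t → μ {ω | Y ω ≤ t} = ENNReal.ofReal (exp (-σ * t ^ (-1 / η)))) :
    μ.real {ω | Y ω ≤ (σ / s) ^ η} = exp (-s) := by
  rw [measureReal_def, hY _ (by positivity), ENNReal.toReal_ofReal (exp_pos _).le,
    rpow_rpow_neg_one_div (div_pos hσ hs).le hη, inv_div]
  congr 1
  field_simp

lemma jointF_rpow_div {Ω : Type*} [MeasureSpace Ω] {d : ℕ} {X : Fin d → Ω → ℝ}
    {σ : Fin d → ℝ} {η s : ℝ} (hσ : ∀ i, 0 < σ i) (hη : η ≠ 0) (hs : 0 < s)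
    (hpos : ∀ t : Fin d → ℝ, (∀ i, 0 < t i) → 0 < jointF X t)
    (hhom : ∀ c : ℝ, 0 < c → ∀ t : Fin d → ℝ, (∀ i, 0 < t i) →
      expo X (fun i => c * t i) = c ^ (-1 / η) * expo X t) :
    jointF X (fun i => (σ i / s) ^ η) = exp (-(s * expo X fun i => σ i ^ η)) := by
  have hu : (fun i => (σ i / s) ^ η) = fun i => s ^ (-η) * σ i ^ η := by
    ext i
    rw [Real.div_rpow (hσ i).le hs.le, Real.rpow_neg hs.le, div_eq_inv_mul]
  have hexpo : expo X (fun i => (σ i / s) ^ η) = s * expo X fun i => σ i ^ η := by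
    rw [hu, hhom _ (by positivity) _ fun i => by have := hσ i; positivity, Real.rpow_neg hs.le,
      Real.inv_rpow (by positivity), rpow_rpow_neg_one_div hs.le hη, inv_inv]
  rw [← hexpo, expo, neg_neg, exp_log (hpos _ fun i => by have := hσ i; positivity)]

lemma probReal_compl_union {Ω : Type*} [MeasurableSpace Ω] {μ : Measure Ω}
    [IsProbabilityMeasure μ] {A B : Set Ω} (hA : MeasurableSet A) (hB : MeasurableSet B) :
    μ.real (A ∪ B)ᶜ = 1 - μ.real A - μ.real B + μ.real (A ∩ B) := by
  rw [probReal_compl_eq_one_sub (hA.union hB)]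
  linarith [measureReal_union_add_inter (μ := μ) (s := A) hB]

lemma probReal_joint_exceedance {Ω : Type*} [MeasureSpace Ω]
    [IsProbabilityMeasure (ℙ : Measure Ω)] {X : Fin 2 → Ω → ℝ} (hX : ∀ i, Measurable (X i))
    {σ : Fin 2 → ℝ} (hσ : ∀ i, 0 < σ i) {η : ℝ} (hη : 0 < η)
    (hmarg : ∀ i, ∀ t : ℝ, 0 < t →
      ℙ {ω | X i ω ≤ t} = ENNReal.ofReal (exp (-σ i * t ^ (-1 / η))))
    (hpos : ∀ t : Fin 2 → ℝ, (∀ i, 0 < t i) → 0 < jointF X t)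
    (hhom : ∀ c : ℝ, 0 < c → ∀ t : Fin 2 → ℝ, (∀ i, 0 < t i) →
      expo X (fun i => c * t i) = c ^ (-1 / η) * expo X t)
    {a : ℝ} (ha0 : 0 < a) (ha1 : a < 1) :
    (ℙ : Measure Ω).real {ω | a < margF (σ 0) η (X 0 ω) ∧ a < margF (σ 1) η (X 1 ω)} =
      1 - 2 * a + a ^ expo X (fun i => σ i ^ η) := by
  obtain ⟨s, hs, rfl⟩ : ∃ s, 0 < s ∧ exp (-s) = a :=
    ⟨-log a, neg_pos.2 (log_neg ha0 ha1), by rw [neg_neg, exp_log ha0]⟩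
  have hexceed : {ω | exp (-s) < margF (σ 0) η (X 0 ω) ∧ exp (-s) < margF (σ 1) η (X 1 ω)} =
      ({ω | X 0 ω ≤ (σ 0 / s) ^ η} ∪ {ω | X 1 ω ≤ (σ 1 / s) ^ η})ᶜ := by
    ext ω
    simp only [Set.mem_ofPred_eq, exp_neg_lt_margF_iff (hσ _) hη hs, Set.mem_compl_iff,
      Set.mem_union, not_or, not_le]
  have hjoint : {ω | X 0 ω ≤ (σ 0 / s) ^ η} ∩ {ω | X 1 ω ≤ (σ 1 / s) ^ η} =
      {ω | ∀ i, X i ω ≤ (σ i / s) ^ η} := by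
    ext ω
    simp [Fin.forall_fin_two]
  have hF : (ℙ : Measure Ω).real {ω | ∀ i, X i ω ≤ (σ i / s) ^ η} =
      exp (-(s * expo X fun i => σ i ^ η)) :=
    jointF_rpow_div hσ hη.ne' hs hpos hhom
  rw [hexceed, probReal_compl_union (measurableSet_le (hX 0) measurable_const)
    (measurableSet_le (hX 1) measurable_const), hjoint, hF,
    measureReal_le_rpow_div_of_frechet (hσ 0) hη.ne' hs (hmarg 0),
    measureReal_le_rpow_div_of_frechet (hσ 1) hη.ne' hs (hmarg 1), ← exp_mul]
  ring_nf

lemma tendsto_mul_one_sub_one_sub_one_div_rpow (L : ℝ) :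
    Tendsto (fun t : ℝ => t * (1 - (1 - 1 / t) ^ L)) atTop (𝓝 L) := by
  have hderiv : HasDerivAt (fun x : ℝ => (1 - x) ^ L) (-L) 0 := by
    simpa using ((hasDerivAt_id (0 : ℝ)).const_sub 1).rpow_const (p := L) (Or.inl (by simp))
  have hslope := (hasDerivAt_iff_tendsto_slope_zero.1 hderiv).comp
    (tendsto_inv_atTop_nhdsGT_zero.mono_right (nhdsGT_le_nhdsNE 0))
  refine (neg_neg L ▸ hslope.neg).congr fun t => ?_
  simp only [Function.comp_apply, smul_eq_mul, inv_inv, zero_add, sub_zero, one_rpow, one_div]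
  ring

theorem statement18_general
    {Ω : Type*} [MeasureSpace Ω] [IsProbabilityMeasure (ℙ : Measure Ω)]
    (X : Fin 2 → Ω → ℝ) (hX : ∀ i, Measurable (X i))
    (σ : Fin 2 → ℝ) (hσ : ∀ i, 0 < σ i)
    (η : ℝ) (hη0 : 0 < η)
    (hmarg : ∀ i, ∀ t : ℝ, 0 < t →
      ℙ {ω | X i ω ≤ t} = ENNReal.ofReal (Real.exp (-σ i * t ^ (-1 / η))))
    (hpos : ∀ t : Fin 2 → ℝ, (∀ i, 0 < t i) → 0 < jointF X t)
    (hhom : ∀ c : ℝ, 0 < c → ∀ t : Fin 2 → ℝ, (∀ i, 0 < t i) →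
      expo X (fun i => c * t i) = c ^ (-1 / η) * expo X t)
    (L : ℝ) (hL : L = expo X (fun i => σ i ^ η)) :
    (L < 2 →
      Tendsto (fun t : ℝ => t * (ℙ {ω | 1 - 1 / t < margF (σ 0) η (X 0 ω) ∧
          1 - 1 / t < margF (σ 1) η (X 1 ω)}).toReal) atTop (𝓝 (2 - L))) ∧
    (L = 2 → ∀ t : ℝ, 1 < t →
      (ℙ {ω | 1 - 1 / t < margF (σ 0) η (X 0 ω) ∧
          1 - 1 / t < margF (σ 1) η (X 1 ω)}).toReal = t ^ (-2 : ℝ)) := by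
  have hexact : ∀ t : ℝ, 1 < t → (ℙ {ω | 1 - 1 / t < margF (σ 0) η (X 0 ω) ∧
      1 - 1 / t < margF (σ 1) η (X 1 ω)}).toReal = 1 - 2 * (1 - 1 / t) + (1 - 1 / t) ^ L := by
    intro t ht
    have hinv : 1 / t < 1 := (div_lt_one (by linarith)).2 ht
    have hinv_pos : 0 < 1 / t := by positivity
    rw [hL]
    exact probReal_joint_exceedance hX hσ hη0 hmarg hpos hhom (by linarith) (by linarith)
  refine ⟨fun _ => ?_, fun hL2 t ht => ?_⟩
  · refine ((tendsto_mul_one_sub_one_sub_one_div_rpow L).const_sub 2).congr' ?_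
    filter_upwards [eventually_gt_atTop 1] with t ht
    rw [hexact t ht]
    field_simp
    ring
  · rw [hexact t ht, hL2, rpow_two, rpow_neg (by linarith), rpow_two]
    field_simp
    ring

theorem statement18
    {Ω : Type*} [MeasureSpace Ω] [IsProbabilityMeasure (ℙ : Measure Ω)]
    (X : Fin 2 → Ω → ℝ) (hX : ∀ i, Measurable (X i))
    (σ : Fin 2 → ℝ) (hσ : ∀ i, 0 < σ i)
    (η : ℝ) (hη0 : 0 < η) (hη1 : η ≤ 1)
    (hmarg : ∀ i, ∀ t : ℝ, 0 < t →
      ℙ {ω | X i ω ≤ t} = ENNReal.ofReal (Real.exp (-σ i * t ^ (-1 / η))))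
    (hpos : ∀ t : Fin 2 → ℝ, (∀ i, 0 < t i) → 0 < jointF X t)
    (hhom : ∀ c : ℝ, 0 < c → ∀ t : Fin 2 → ℝ, (∀ i, 0 < t i) →
      expo X (fun i => c * t i) = c ^ (-1 / η) * expo X t)
    (L : ℝ) (hL : L = expo X (fun i => σ i ^ η)) :
    (L < 2 →
      Tendsto (fun t : ℝ => t * (ℙ {ω | 1 - 1 / t < margF (σ 0) η (X 0 ω) ∧
          1 - 1 / t < margF (σ 1) η (X 1 ω)}).toReal) atTop (𝓝 (2 - L))) ∧
    (L = 2 → ∀ t : ℝ, 1 < t →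
      (ℙ {ω | 1 - 1 / t < margF (σ 0) η (X 0 ω) ∧
          1 - 1 / t < margF (σ 1) η (X 1 ω)}).toReal = t ^ (-2 : ℝ)) :=
  statement18_general X hX σ hσ η hη0 hmarg hpos hhom L hL
end
end

section
/- Let G be a d-variate distribution function satisfying conditions (i) and (ii), with exponent function ℓ_Y(t) = −ln G(t), and let U = (U_1,…,U_d) be a random vector whose joint survival function is the inverted multivariate extreme value model P(U_1 > u_1, …, U_d > u_d) = exp(−ℓ_Y((−σ_1/ln(1−u_1))^η, …, (−σ_d/ln(1−u_d))^η)) for (u_1,…,u_d) ∈ (0,1)^d. Then for every t > 1, P(U_1 > 1 − 1/t, …, U_d > 1 − 1/t) = t^{−ℓ_Y(σ_1^η,…,σ_d^η)}; hence the Ledford–Tawn condition P(U_1 > 1 − 1/t, …, U_d > 1 − 1/t) = t^{−1/κ} 𝓛(t) holds with coefficient of asymptotic tail independence κ = 1/ℓ_Y(σ_1^η,…,σ_d^η) and slowly varying function 𝓛 ≡ 1. -/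
/-!
Since `-σ / log (1 - 1/t) = σ / log t`, the survival function at level `1 - 1/t` is
`exp (-ℓ((log t)^(-η) σ^η))`, and homogeneity of order `-1/η` turns the exponent into
`-(log t) ℓ(σ^η)`, i.e. the survival probability is `t^(-ℓ(σ^η))`. The coefficient
`κ = 1/ℓ(σ^η)` lies in `(0, 1]` because the joint distribution function is dominated by a
marginal, and every marginal equals `exp (-1)` at `σ_i^η`.
-/

open MeasureTheory ProbabilityTheory Real Filter Topology
open scoped ProbabilityTheory

noncomputable section

section ExponentFunction

variable {Ω : Type*} [MeasureSpace Ω] {d : ℕ} (X : Fin d → Ω → ℝ) (t : Fin d → ℝ)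

lemma jointF_le_of_measure_le (i : Fin d) {a : ℝ} (ha : 0 ≤ a)
    (h : ℙ {ω | X i ω ≤ t i} ≤ ENNReal.ofReal a) : jointF X t ≤ a :=
  ENNReal.toReal_le_of_le_ofReal ha <|
    (measure_mono (Set.ofPred_subset_ofPred.2 fun _ hω => hω i)).trans h

lemma le_expo_of_jointF_le_exp {a : ℝ} (hpos : 0 < jointF X t)
    (h : jointF X t ≤ exp (-a)) : a ≤ expo X t := by
  have : log (jointF X t) ≤ -a := (log_le_iff_le_exp hpos).2 h
  unfold expo
  linarith

lemma one_le_expo_of_marginal_eq (hpos : 0 < jointF X t) (i : Fin d)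
    (hi : ℙ {ω | X i ω ≤ t i} = ENNReal.ofReal (exp (-1))) : 1 ≤ expo X t :=
  le_expo_of_jointF_le_exp X t hpos (jointF_le_of_measure_le X t i (exp_nonneg _) hi.le)

end ExponentFunction

lemma mul_rpow_rpow_neg_one_div {σ η : ℝ} (hσ : 0 < σ) (hη : η ≠ 0) :
    σ * (σ ^ η) ^ (-1 / η) = 1 := by
  rw [← rpow_mul hσ.le, show η * (-1 / η) = -1 by field_simp, rpow_neg_one,
    mul_inv_cancel₀ hσ.ne']

lemma rpow_neg_rpow_neg_one_div {x η : ℝ} (hx : 0 < x) (hη : η ≠ 0) :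
    (x ^ (-η)) ^ (-1 / η) = x := by
  rw [← rpow_mul hx.le, show -η * (-1 / η) = 1 by field_simp, rpow_one]

lemma one_sub_one_div_mem_Ioo {t : ℝ} (ht : 1 < t) : 1 - 1 / t ∈ Set.Ioo (0 : ℝ) 1 := by
  have : 0 < 1 / t := by positivity
  have : 1 / t < 1 := (div_lt_one (by linarith)).2 ht
  constructor <;> linarith

lemma rpow_neg_div_log_one_sub_one_div {t σ : ℝ} (ht : 1 < t) (hσ : 0 < σ) (η : ℝ) :
    (-σ / log (1 - (1 - 1 / t))) ^ η = log t ^ (-η) * σ ^ η := by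
  have hlog : 0 < log t := log_pos ht
  rw [sub_sub_cancel, one_div, log_inv, neg_div_neg_eq, div_eq_inv_mul,
    mul_rpow (inv_nonneg.2 hlog.le) hσ.le, inv_rpow hlog.le, ← rpow_neg hlog.le]

theorem statement19_general
    {Ω' : Type*} [MeasureSpace Ω']
    {Ω : Type*} [MeasureSpace Ω]
    {d : ℕ} (hd : 0 < d)
    (Y : Fin d → Ω' → ℝ)
    (σ : Fin d → ℝ) (hσ : ∀ i, 0 < σ i)
    (η : ℝ) (hη0 : 0 < η)
    (hmargY : ∀ i, ∀ t : ℝ, 0 < t →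
      ℙ {ω | Y i ω ≤ t} = ENNReal.ofReal (Real.exp (-σ i * t ^ (-1 / η))))
    (hposY : ∀ t : Fin d → ℝ, (∀ i, 0 < t i) → 0 < jointF Y t)
    (hhomY : ∀ c : ℝ, 0 < c → ∀ t : Fin d → ℝ, (∀ i, 0 < t i) →
      expo Y (fun i => c * t i) = c ^ (-1 / η) * expo Y t)
    (U : Fin d → Ω → ℝ)
    (hsurv : ∀ u : Fin d → ℝ, (∀ i, u i ∈ Set.Ioo (0:ℝ) 1) →
      ℙ {ω | ∀ i, u i < U i ω} =
        ENNReal.ofReal (Real.exp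
          (-(expo Y (fun i => (-(σ i) / Real.log (1 - u i)) ^ η))))) :
    (0 < (expo Y (fun i => σ i ^ η))⁻¹ ∧ (expo Y (fun i => σ i ^ η))⁻¹ ≤ 1) ∧
    ∀ t : ℝ, 1 < t →
      (ℙ {ω | ∀ i, 1 - 1 / t < U i ω}).toReal =
        t ^ (-(expo Y (fun i => σ i ^ η))) := by
  have hση : ∀ i, 0 < σ i ^ η := fun i => rpow_pos_of_pos (hσ i) η
  have hL : 1 ≤ expo Y (fun i => σ i ^ η) := by
    refine one_le_expo_of_marginal_eq Y _ (hposY _ hση) ⟨0, hd⟩ ?_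
    rw [hmargY _ _ (hση _), neg_mul, mul_rpow_rpow_neg_one_div (hσ _) hη0.ne']
  refine ⟨⟨inv_pos.2 (by linarith), inv_le_one_of_one_le₀ hL⟩, fun t ht => ?_⟩
  have hlog : 0 < log t := log_pos ht
  have hsurv_t := hsurv (fun _ => 1 - 1 / t) (fun _ => one_sub_one_div_mem_Ioo ht)
  have harg : (fun i => (-σ i / log (1 - (1 - 1 / t))) ^ η)
      = fun i => log t ^ (-η) * σ i ^ η :=
    funext fun i => rpow_neg_div_log_one_sub_one_div ht (hσ i) η
  rw [harg, hhomY _ (rpow_pos_of_pos hlog _) _ hση,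
    rpow_neg_rpow_neg_one_div hlog hη0.ne'] at hsurv_t
  rw [hsurv_t, ENNReal.toReal_ofReal (exp_nonneg _), rpow_def_of_pos (by linarith), mul_neg]

theorem statement19
    {Ω' : Type*} [MeasureSpace Ω'] [IsProbabilityMeasure (ℙ : Measure Ω')]
    {Ω : Type*} [MeasureSpace Ω] [IsProbabilityMeasure (ℙ : Measure Ω)]
    {d : ℕ} (hd : 0 < d)
    (Y : Fin d → Ω' → ℝ) (hY : ∀ i, Measurable (Y i))
    (σ : Fin d → ℝ) (hσ : ∀ i, 0 < σ i)
    (η : ℝ) (hη0 : 0 < η) (hη1 : η ≤ 1)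
    (hmargY : ∀ i, ∀ t : ℝ, 0 < t →
      ℙ {ω | Y i ω ≤ t} = ENNReal.ofReal (Real.exp (-σ i * t ^ (-1 / η))))
    (hposY : ∀ t : Fin d → ℝ, (∀ i, 0 < t i) → 0 < jointF Y t)
    (hhomY : ∀ c : ℝ, 0 < c → ∀ t : Fin d → ℝ, (∀ i, 0 < t i) →
      expo Y (fun i => c * t i) = c ^ (-1 / η) * expo Y t)
    (U : Fin d → Ω → ℝ) (hU : ∀ i, Measurable (U i))
    (hsurv : ∀ u : Fin d → ℝ, (∀ i, u i ∈ Set.Ioo (0:ℝ) 1) →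
      ℙ {ω | ∀ i, u i < U i ω} =
        ENNReal.ofReal (Real.exp
          (-(expo Y (fun i => (-(σ i) / Real.log (1 - u i)) ^ η))))) :
    (0 < (expo Y (fun i => σ i ^ η))⁻¹ ∧ (expo Y (fun i => σ i ^ η))⁻¹ ≤ 1) ∧
    ∀ t : ℝ, 1 < t →
      (ℙ {ω | ∀ i, 1 - 1 / t < U i ω}).toReal =
        t ^ (-(expo Y (fun i => σ i ^ η))) :=
  statement19_general hd Y σ hσ η hη0 hmargY hposY hhomY U hsurv
end
end
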